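/- arXiv:2509.11590 — 3 statements merged into one kernel-verified Lean document; each statement's English description precedes it below -/
import Mathlib

section
/- For every integer n ≥ 2, in R_n one has F_{n,n} = (λ_n + λ_n^{−1})·F_{n−1,n−1} + F_{n−2,n−1}, where F_{n−1,n−1} and F_{n−2,n−1} are regarded as elements of R_n via the natural inclusion R_{n−1} ⊆ R_n. -/
open MvPolynomial

noncomputable section

/-- The Laurent polynomial ring `ℤ[λ₁^{±1},…,λₙ^{±1}]`, modeled as the group algebra of
`Fin n →₀ ℤ` over `ℤ`. -/
abbrev LaurentRing (n : ℕ) : Type := AddMonoidAlgebra ℤ (Fin n →₀ ℤ)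

/-- The variable `λᵢ`. -/
def lam (n : ℕ) (i : Fin n) : LaurentRing n :=
  AddMonoidAlgebra.single (Finsupp.single i 1) 1

/-- The inverse variable `λᵢ⁻¹`. -/
def lamInv (n : ℕ) (i : Fin n) : LaurentRing n :=
  AddMonoidAlgebra.single (Finsupp.single i (-1)) 1

/-- The multiset `{λ₁,…,λ_m,λ₁⁻¹,…,λ_m⁻¹}` (the first `m` variables and their inverses),
inside `LaurentRing n`. -/
def lamSet (n m : ℕ) : Multiset (LaurentRing n) :=
  ((Finset.univ.filter (fun i : Fin n => (i : ℕ) < m)).val.map (lam n)) +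
    ((Finset.univ.filter (fun i : Fin n => (i : ℕ) < m)).val.map (lamInv n))

/-- `E_{k,m}` (inside `LaurentRing n`): the `k`-th elementary symmetric polynomial in the `2m`
elements `λ₁,…,λ_m,λ₁⁻¹,…,λ_m⁻¹`, with the convention that it is `0` for `k < 0`
(and automatically `0` for `k > 2m`, `1` for `k = 0`). -/
def EE (n m : ℕ) (k : ℤ) : LaurentRing n :=
  if k < 0 then 0 else (lamSet n m).esymm k.toNat

/-- `F_{k,m} = E_{k,m} - E_{k-2,m}`. -/
def FF (n m : ℕ) (k : ℤ) : LaurentRing n :=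
  EE n m k - EE n m (k - 2)

/-- `E_{k,m}^{(N)}`: the element obtained from `E_{k,m}` by the substitution `λᵢ ↦ λᵢᴺ`. -/
def EEPow (n m N : ℕ) (k : ℤ) : LaurentRing n :=
  if k < 0 then 0 else ((lamSet n m).map (· ^ N)).esymm k.toNat

/-- `F_{k,m}^{(N)} = E_{k,m}^{(N)} - E_{k-2,m}^{(N)}`. -/
def FFPow (n m N : ℕ) (k : ℤ) : LaurentRing n :=
  EEPow n m N k - EEPow n m N (k - 2)

end

section Aux

open Multiset

variable {R : Type*} [CommRing R]

theorem my_esymm_cons (a : R) (s : Multiset R) (k : ℕ) :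
    (a ::ₘ s).esymm (k + 1) = a * s.esymm k + s.esymm (k + 1) := by
  rw [Multiset.esymm, powersetCard_cons, Multiset.map_add, Multiset.sum_add,
    Multiset.map_map, Multiset.esymm, Multiset.esymm]
  rw [add_comm]
  congr 1
  rw [← Multiset.sum_map_mul_left]
  congr 1
  apply Multiset.map_congr rfl
  intro t _
  simp [Multiset.prod_cons]

theorem my_esymm_zero' (s : Multiset R) : s.esymm 0 = 1 := by
  simp [Multiset.esymm]

theorem my_esymm_empty (j : ℕ) (hj : j ≠ 0) : (0 : Multiset R).esymm j = 0 := by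
  cases j with
  | zero => omega
  | succ j => simp [Multiset.esymm, Multiset.powersetCard_zero_right]

theorem my_esymm_two_cons (a b : R) (hab : a * b = 1) (s : Multiset R) (k : ℕ) :
    (a ::ₘ b ::ₘ s).esymm (k + 2) =
      s.esymm (k + 2) + (a + b) * s.esymm (k + 1) + s.esymm k := by
  rw [show k + 2 = (k + 1) + 1 from rfl, my_esymm_cons, my_esymm_cons, my_esymm_cons]
  linear_combination s.esymm k * hab

theorem my_esymm_two_cons_one (a b : R) (s : Multiset R) :
    (a ::ₘ b ::ₘ s).esymm 1 = s.esymm 1 + (a + b) * s.esymm 0 := by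
  rw [show (1 : ℕ) = 0 + 1 from rfl, my_esymm_cons, my_esymm_cons, my_esymm_zero',
    my_esymm_zero']
  ring

end Aux

section Main

theorem lam_mul_lamInv (n : ℕ) (i : Fin n) : lam n i * lamInv n i = 1 := by
  unfold lam lamInv
  rw [AddMonoidAlgebra.single_mul_single]
  norm_num
  rfl

theorem lamSet_succ (n m : ℕ) (h : m < n) :
    lamSet n (m + 1) = lam n ⟨m, h⟩ ::ₘ lamInv n ⟨m, h⟩ ::ₘ lamSet n m := by
  have hfil : (Finset.univ.filter (fun i : Fin n => (i : ℕ) < m + 1))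
      = insert ⟨m, h⟩ (Finset.univ.filter (fun i : Fin n => (i : ℕ) < m)) := by
    ext i
    simp [Fin.ext_iff]
    omega
  have hnm : (⟨m, h⟩ : Fin n) ∉ Finset.univ.filter (fun i : Fin n => (i : ℕ) < m) := by
    simp
  have hv : (insert (⟨m, h⟩ : Fin n) (Finset.univ.filter (fun i : Fin n => (i : ℕ) < m))).val
      = ⟨m, h⟩ ::ₘ (Finset.univ.filter (fun i : Fin n => (i : ℕ) < m)).val :=
    Finset.insert_val_of_notMem hnm
  unfold lamSet
  rw [hfil, hv, Multiset.map_cons, Multiset.map_cons, Multiset.cons_add, Multiset.add_cons]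

theorem EE_ofNat (n m j : ℕ) : EE n m (j : ℤ) = (lamSet n m).esymm j := by
  simp [EE]

theorem EE_neg (n m : ℕ) (k : ℤ) (hk : k < 0) : EE n m k = 0 := by
  simp [EE, hk]

theorem EE_rec (n m : ℕ) (h : m < n) (k : ℤ) :
    EE n (m + 1) k = EE n m k + (lam n ⟨m, h⟩ + lamInv n ⟨m, h⟩) * EE n m (k - 1)
      + EE n m (k - 2) := by
  rcases lt_or_ge k 0 with hk | hk
  · rw [EE_neg _ _ _ hk, EE_neg _ _ _ hk, EE_neg _ _ _ (by omega), EE_neg _ _ _ (by omega)]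
    ring
  · lift k to ℕ using hk
    match k with
    | 0 =>
      rw [show ((0 : ℕ) : ℤ) - 1 = -1 by norm_num, show ((0 : ℕ) : ℤ) - 2 = -2 by norm_num,
        EE_neg n m (-1) (by norm_num), EE_neg n m (-2) (by norm_num),
        EE_ofNat n (m + 1) 0, EE_ofNat n m 0, my_esymm_zero', my_esymm_zero']
      ring
    | 1 =>
      rw [show ((1 : ℕ) : ℤ) - 1 = ((0 : ℕ) : ℤ) by norm_num,
        show ((1 : ℕ) : ℤ) - 2 = -1 by norm_num,
        EE_neg n m (-1) (by norm_num), EE_ofNat n (m + 1) 1, EE_ofNat n m 1, EE_ofNat n m 0,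
        lamSet_succ n m h, my_esymm_two_cons_one]
      ring
    | (j + 2) =>
      rw [show ((j + 2 : ℕ) : ℤ) - 1 = ((j + 1 : ℕ) : ℤ) by push_cast; ring,
        show ((j + 2 : ℕ) : ℤ) - 2 = ((j : ℕ) : ℤ) by push_cast; ring,
        EE_ofNat, EE_ofNat, EE_ofNat, EE_ofNat, lamSet_succ n m h,
        my_esymm_two_cons _ _ (lam_mul_lamInv n ⟨m, h⟩)]

theorem EE_symm (n : ℕ) : ∀ m : ℕ, m ≤ n → ∀ k : ℤ, EE n m k = EE n m (2 * (m : ℤ) - k) := by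
  intro m
  induction m with
  | zero =>
    intro _ k
    have h0 : lamSet n 0 = 0 := by
      simp [lamSet]
    rcases lt_trichotomy k 0 with hk | hk | hk
    · rw [EE_neg _ _ _ hk, EE, if_neg (by omega), h0,
        my_esymm_empty _ (by omega)]
    · subst hk; norm_num
    · rw [EE_neg _ _ (2 * ((0 : ℕ) : ℤ) - k) (by omega), EE, if_neg (by omega), h0,
        my_esymm_empty _ (by omega)]
  | succ m ih =>
    intro hmn k
    have hm : m < n := by omega
    rw [EE_rec n m hm k, EE_rec n m hm (2 * ((m + 1 : ℕ) : ℤ) - k),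
      ih (by omega) k, ih (by omega) (k - 1), ih (by omega) (k - 2),
      show 2 * ((m + 1 : ℕ) : ℤ) - k - 1 = 2 * (m : ℤ) - (k - 1) by push_cast; ring,
      show 2 * ((m + 1 : ℕ) : ℤ) - k - 2 = 2 * (m : ℤ) - k by push_cast; ring,
      show 2 * ((m + 1 : ℕ) : ℤ) - k = 2 * (m : ℤ) - (k - 2) by push_cast; ring]
    ring

end Main

theorem F_top_recursion (n : ℕ) (hn : 2 ≤ n) :
    FF n n (n : ℤ)
      = (lam n ⟨n - 1, by omega⟩ + lamInv n ⟨n - 1, by omega⟩) * FF n (n - 1) ((n : ℤ) - 1)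
        + FF n (n - 1) ((n : ℤ) - 2) := by
  obtain ⟨m, rfl⟩ : ∃ m, n = m + 1 := ⟨n - 1, by omega⟩
  have hm : m < m + 1 := Nat.lt_succ_self m
  simp only [Nat.add_sub_cancel, FF]
  rw [EE_rec (m + 1) m hm ((m + 1 : ℕ) : ℤ), EE_rec (m + 1) m hm (((m + 1 : ℕ) : ℤ) - 2)]
  have hsym : EE (m + 1) m ((m + 1 : ℕ) : ℤ) = EE (m + 1) m (((m + 1 : ℕ) : ℤ) - 2) := by
    rw [EE_symm (m + 1) m (by omega) ((m + 1 : ℕ) : ℤ),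
      show 2 * (m : ℤ) - ((m + 1 : ℕ) : ℤ) = ((m + 1 : ℕ) : ℤ) - 2 by push_cast; ring]
  rw [hsym, show ((m + 1 : ℕ) : ℤ) - 1 - 2 = ((m + 1 : ℕ) : ℤ) - 2 - 1 by ring]
  ring
end

section
/- For every integer n ≥ 1, the elements E_{1,n},…,E_{n,n} of R_n are algebraically independent over ℤ; that is, the ℤ-algebra homomorphism ℤ[t_1,…,t_n] → R_n sending t_i to E_{i,n} is injective. -/
open MvPolynomial

noncomputable section EAI
namespace EAI

open AddMonoidAlgebra Finset

variable {n k d : ℕ}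

/-- coercion ℕ-exponents to ℤ-exponents -/
def natX (n : ℕ) : (Fin n →₀ ℕ) →+ (Fin n →₀ ℤ) :=
  Finsupp.mapRange.addMonoidHom (Nat.castAddMonoidHom ℤ)

lemma natX_injective : Function.Injective (natX n) := by
  intro a b h
  exact Finsupp.mapRange_injective (Nat.cast : ℕ → ℤ) rfl Nat.cast_injective h

def iota (n : ℕ) : MvPolynomial (Fin n) ℤ →ₐ[ℤ] LaurentRing n :=
  AddMonoidAlgebra.mapDomainAlgHom ℤ ℤ (natX n)

lemma iota_injective : Function.Injective (iota n) := by
  have : ⇑(iota n) = AddMonoidAlgebra.mapDomain (natX n) := rfl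
  rw [this]
  exact AddMonoidAlgebra.mapDomain_injective natX_injective

lemma iota_monomial (t : Fin n →₀ ℕ) (c : ℤ) :
    iota n (MvPolynomial.monomial t c) = AddMonoidAlgebra.single (natX n t) c := by
  show AddMonoidAlgebra.mapDomain (natX n) _ = _
  show AddMonoidAlgebra.mapDomain (natX n) (AddMonoidAlgebra.single t c) = _
  rw [AddMonoidAlgebra.mapDomain_single]

def gg (n : ℕ) : Fin n ⊕ Fin n → LaurentRing n := Sum.elim (lam n) (lamInv n)

def epsz (n : ℕ) : Fin n ⊕ Fin n → (Fin n →₀ ℤ) :=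
  Sum.elim (fun i => Finsupp.single i 1) (fun i => -(Finsupp.single i 1))

lemma prod_single {ι M : Type*} [AddCommMonoid M] (s : Finset ι) (h : ι → M) :
    (∏ x ∈ s, (AddMonoidAlgebra.single (h x) 1 : AddMonoidAlgebra ℤ M)) =
      AddMonoidAlgebra.single (∑ x ∈ s, h x) 1 := by
  classical
  induction s using Finset.cons_induction with
  | empty => simp [AddMonoidAlgebra.one_def]
  | cons a s ha ih =>
      rw [Finset.prod_cons, ih, AddMonoidAlgebra.single_mul_single, Finset.sum_cons, one_mul]

lemma gg_eq (x : Fin n ⊕ Fin n) : gg n x = AddMonoidAlgebra.single (epsz n x) 1 := by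
  cases x with
  | inl i => rfl
  | inr i =>
      show lamInv n i = _
      rw [lamInv, epsz]
      simp [Finsupp.single_neg]

def onevec (n : ℕ) : Fin n →₀ ℤ := ∑ i : Fin n, Finsupp.single i 1

def lamAll (n : ℕ) : LaurentRing n := AddMonoidAlgebra.single (onevec n) 1

lemma isUnit_lamAll : IsUnit (lamAll n) := by
  apply IsUnit.of_mul_eq_one (AddMonoidAlgebra.single (-onevec n) 1)
  rw [lamAll, AddMonoidAlgebra.single_mul_single]
  simp [AddMonoidAlgebra.one_def]

/-- exponent vector (in ℕ) of `λall * ∏_{x ∈ A} g x` -/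
def vA (A : Finset (Fin n ⊕ Fin n)) : Fin n →₀ ℕ :=
  Finsupp.equivFunOnFinite.symm fun i =>
    ((if Sum.inl i ∈ A then 1 else 0) + (if Sum.inr i ∈ A then 0 else 1))

lemma vA_apply (A : Finset (Fin n ⊕ Fin n)) (i : Fin n) :
    vA A i = (if Sum.inl i ∈ A then 1 else 0) + (if Sum.inr i ∈ A then 0 else 1) := rfl

lemma epsz_apply (x : Fin n ⊕ Fin n) (i : Fin n) :
    epsz n x i = (if x = Sum.inl i then 1 else 0) + (if x = Sum.inr i then (-1) else 0) := by
  cases x with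
  | inl j =>
      simp only [epsz, Sum.elim_inl, Finsupp.single_apply, Sum.inl.injEq,
        reduceCtorEq, if_false, add_zero]
  | inr j =>
      simp only [epsz, Sum.elim_inr, Finsupp.coe_neg, Pi.neg_apply, Finsupp.single_apply,
        Sum.inr.injEq, reduceCtorEq, if_false, zero_add]
      split_ifs <;> simp

lemma onevec_apply (i : Fin n) : onevec n i = 1 := by
  rw [onevec, Finsupp.finset_sum_apply]
  simp [Finsupp.single_apply]

lemma exp_eq (A : Finset (Fin n ⊕ Fin n)) :
    onevec n + ∑ x ∈ A, epsz n x = natX n (vA A) := by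
  ext i
  have hr : natX n (vA A) i = ((vA A i : ℕ) : ℤ) := rfl
  rw [Finsupp.add_apply, Finsupp.finset_sum_apply, onevec_apply, hr, vA_apply]
  have : ∀ x ∈ A, epsz n x i =
      (if x = Sum.inl i then (1:ℤ) else 0) + (if x = Sum.inr i then (-1) else 0) :=
    fun x _ => epsz_apply x i
  rw [Finset.sum_congr rfl this, Finset.sum_add_distrib]
  simp only [Finset.sum_ite_eq, Finset.sum_ite_eq']
  push_cast
  split_ifs <;> ring

lemma lamSet_eq : lamSet n n = Multiset.map (gg n) (Finset.univ : Finset (Fin n ⊕ Fin n)).val := by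
  have h1 : (Finset.univ.filter (fun i : Fin n => (i : ℕ) < n)) = Finset.univ :=
    Finset.filter_true_of_mem (fun i _ => i.isLt)
  rw [lamSet, h1, ← Finset.univ_disjSum_univ, Finset.val_disjSum, Multiset.disjSum,
    Multiset.map_add, Multiset.map_map, Multiset.map_map]
  rfl

def PP (n k : ℕ) : MvPolynomial (Fin n) ℤ :=
  ∑ A ∈ (Finset.univ : Finset (Fin n ⊕ Fin n)).powersetCard k, MvPolynomial.monomial (vA A) 1

lemma iota_PP (k : ℕ) : iota n (PP n k) = lamAll n * (lamSet n n).esymm k := by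
  rw [lamSet_eq, Finset.esymm_map_val, Finset.mul_sum, PP, map_sum]
  refine Finset.sum_congr rfl fun A _ => ?_
  rw [iota_monomial]
  have h : ∏ x ∈ A, gg n x = AddMonoidAlgebra.single (∑ x ∈ A, epsz n x) 1 := by
    rw [← prod_single]; exact Finset.prod_congr rfl fun x _ => gg_eq x
  rw [h, lamAll, AddMonoidAlgebra.single_mul_single, one_mul, exp_eq]


def A0 (n k : ℕ) : Finset (Fin n ⊕ Fin n) :=
  (Finset.univ.filter fun i : Fin n => (i : ℕ) < k).map ⟨Sum.inl, Sum.inl_injective⟩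

lemma card_filter_lt (h : k ≤ n) :
    (Finset.univ.filter fun i : Fin n => (i : ℕ) < k).card = k := by
  have he : (Finset.univ.filter fun i : Fin n => (i : ℕ) < k) =
      (Finset.range k).attachFin (fun m hm => lt_of_lt_of_le (Finset.mem_range.mp hm) h) := by
    ext i
    simp [Finset.mem_attachFin]
  rw [he, Finset.card_attachFin, Finset.card_range]

lemma card_A0 (h : k ≤ n) : (A0 n k).card = k := by
  rw [A0, Finset.card_map, card_filter_lt h]

lemma mem_A0 (x : Fin n ⊕ Fin n) :
    x ∈ A0 n k ↔ ∃ i : Fin n, (i : ℕ) < k ∧ Sum.inl i = x := by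
  simp [A0]

lemma A0_mem_powersetCard (h : k ≤ n) :
    A0 n k ∈ (Finset.univ : Finset (Fin n ⊕ Fin n)).powersetCard k :=
  Finset.mem_powersetCard.2 ⟨Finset.subset_univ _, card_A0 h⟩

lemma vA_A0_apply (i : Fin n) : vA (A0 n k) i = if (i : ℕ) < k then 2 else 1 := by
  rw [vA_apply]
  have h1 : (Sum.inl i ∈ A0 n k) ↔ (i : ℕ) < k := by simp [mem_A0]
  have h2 : (Sum.inr i ∈ A0 n k) ↔ False := by simp [mem_A0]
  rw [if_congr h1 rfl rfl, if_congr h2 rfl rfl, if_false]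
  split_ifs <;> rfl

lemma inl_mem_of_vA_eq_two {A : Finset (Fin n ⊕ Fin n)} {i : Fin n}
    (h : vA A i = 2) : Sum.inl i ∈ A ∧ Sum.inr i ∉ A := by
  rw [vA_apply] at h
  constructor
  · by_contra hin
    rw [if_neg hin] at h
    split_ifs at h <;> omega
  · intro hin
    rw [if_pos hin] at h
    split_ifs at h <;> omega

lemma A0_subset {A : Finset (Fin n ⊕ Fin n)}
    (h : ∀ i : Fin n, (i : ℕ) < k → vA A i = 2) : A0 n k ⊆ A := by
  intro x hx
  obtain ⟨i, hik, rfl⟩ := (mem_A0 x).1 hx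
  exact (inl_mem_of_vA_eq_two (h i hik)).1

lemma vA_lt (hk : k ≤ n) {A : Finset (Fin n ⊕ Fin n)} (hA : A.card = k)
    (hne : A ≠ A0 n k) : toLex (vA A) < toLex (vA (A0 n k)) := by
  have hsubne : ¬ A0 n k ⊆ A := by
    intro hsub
    exact hne (Finset.eq_of_subset_of_card_le hsub (by rw [hA, card_A0 hk])).symm
  have hvne : vA A ≠ vA (A0 n k) := by
    intro he
    apply hsubne
    apply A0_subset
    intro i hik
    rw [he, vA_A0_apply, if_pos hik]
  set S : Finset (Fin n) := Finset.univ.filter fun i => vA A i ≠ vA (A0 n k) i with hS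
  have hSne : S.Nonempty := by
    rw [Finset.filter_nonempty_iff]
    by_contra hc
    push_neg at hc
    exact hvne (Finsupp.ext fun i => hc i (Finset.mem_univ i))
  set j := S.min' hSne with hj
  have hjS : j ∈ S := S.min'_mem hSne
  have hjne : vA A j ≠ vA (A0 n k) j := (Finset.mem_filter.1 hjS).2
  have hlow : ∀ d : Fin n, d < j → vA A d = vA (A0 n k) d := by
    intro d hd
    by_contra hc
    exact absurd (S.min'_le d (Finset.mem_filter.2 ⟨Finset.mem_univ d, hc⟩)) (not_le.2 hd)
  refine ⟨j, fun d hd => hlow d hd, ?_⟩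
  show (vA A) j < (vA (A0 n k)) j
  rw [vA_A0_apply]
  by_cases hjk : (j : ℕ) < k
  · rw [vA_A0_apply, if_pos hjk] at hjne
    rw [if_pos hjk]
    rw [vA_apply] at hjne ⊢
    split_ifs at hjne ⊢ <;> omega
  · rw [vA_A0_apply, if_neg hjk] at hjne
    rw [if_neg hjk]
    -- show `vA A j = 0`, i.e. `Sum.inl j ∉ A ∧ Sum.inr j ∈ A`
    have hnotinl : Sum.inl j ∉ A := by
      intro hin
      -- then inserting `inl j` into `A0 n k ⊆ A` gives `k+1 ≤ k`
      have hsub : insert (Sum.inl j) (A0 n k) ⊆ A := by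
        apply Finset.insert_subset hin
        apply A0_subset
        intro i hik
        have hij : i < j := by
          rw [Fin.lt_def]
          omega
        rw [hlow i hij, vA_A0_apply, if_pos hik]
      have hcard : k + 1 ≤ k := by
        have h1 := Finset.card_le_card hsub
        rw [Finset.card_insert_of_notMem, card_A0 hk, hA] at h1
        · exact h1
        · intro hmem
          obtain ⟨i, hik, hie⟩ := (mem_A0 _).1 hmem
          rw [Sum.inl.injEq] at hie
          subst hie
          exact hjk hik
      omega
    rw [vA_apply] at hjne ⊢
    rw [if_neg hnotinl] at hjne ⊢
    split_ifs at hjne ⊢ <;> omega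

lemma PP_spec (hk : 1 ≤ k) (hk' : k ≤ n) :
    AddMonoidAlgebra.Monic toLex (PP n k) ∧
      AddMonoidAlgebra.supDegree toLex (PP n k) = toLex (vA (A0 n k)) := by
  have h := supDegree_leadingCoeff_sum_eq (D := toLex)
    (s := (Finset.univ : Finset (Fin n ⊕ Fin n)).powersetCard k) (i := A0 n k)
    (f := fun A => MvPolynomial.monomial (vA A) (1 : ℤ))
    (A0_mem_powersetCard hk') ?_
  · beta_reduce at h
    rw [← single_eq_monomial, supDegree_single_ne_zero _ one_ne_zero,
      leadingCoeff_single toLex.injective] at h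
    rw [PP]
    exact ⟨h.2, h.1⟩
  · intro A hA hne
    have hcard : A.card = k := (Finset.mem_powersetCard.1 hA).2
    simp_rw [← single_eq_monomial, supDegree_single_ne_zero _ one_ne_zero]
    exact vA_lt hk' hcard hne

lemma monic_prod {ι : Type*} (s : Finset ι) (f : ι → MvPolynomial (Fin n) ℤ)
    (dd : ι → (Fin n →₀ ℕ))
    (h : ∀ i ∈ s, AddMonoidAlgebra.Monic toLex (f i) ∧
      AddMonoidAlgebra.supDegree toLex (f i) = toLex (dd i)) :
    AddMonoidAlgebra.Monic toLex (∏ i ∈ s, f i) ∧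
      AddMonoidAlgebra.supDegree toLex (∏ i ∈ s, f i) = toLex (∑ i ∈ s, dd i) := by
  classical
  induction s using Finset.cons_induction with
  | empty =>
      refine ⟨monic_one toLex.injective, ?_⟩
      rw [Finset.prod_empty, Finset.sum_empty, AddMonoidAlgebra.one_def,
        supDegree_single_ne_zero _ one_ne_zero]
  | cons a s ha ih =>
      obtain ⟨h1, h2⟩ := h a (Finset.mem_cons_self a s)
      obtain ⟨ih1, ih2⟩ := ih fun i hi => h i (Finset.mem_cons.2 (Or.inr hi))
      rw [Finset.prod_cons, Finset.sum_cons]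
      refine ⟨h1.mul toLex.injective toLex_add ih1, ?_⟩
      rw [h1.supDegree_mul toLex.injective toLex_add rfl ih1, h2, ih2]
      rfl

lemma prodX_spec :
    AddMonoidAlgebra.Monic toLex (∏ i : Fin n, (MvPolynomial.X i : MvPolynomial (Fin n) ℤ)) ∧
      AddMonoidAlgebra.supDegree toLex (∏ i : Fin n, (MvPolynomial.X i : MvPolynomial (Fin n) ℤ))
        = toLex (vA (∅ : Finset (Fin n ⊕ Fin n))) := by
  have hX : ∀ i : Fin n, (MvPolynomial.X i : MvPolynomial (Fin n) ℤ) =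
      AddMonoidAlgebra.single (Finsupp.single i 1) 1 := fun i => rfl
  have hv : (∑ i : Fin n, Finsupp.single i (1 : ℕ)) = vA (∅ : Finset (Fin n ⊕ Fin n)) := by
    ext i
    rw [Finsupp.finset_sum_apply, vA_apply]
    simp [Finsupp.single_apply]
  have hp : (∏ i : Fin n, (MvPolynomial.X i : MvPolynomial (Fin n) ℤ)) =
      AddMonoidAlgebra.single (vA (∅ : Finset (Fin n ⊕ Fin n))) 1 := by
    rw [← hv, ← prod_single]
    exact Finset.prod_congr rfl fun i _ => hX i
  rw [hp, AddMonoidAlgebra.Monic, supDegree_single_ne_zero _ one_ne_zero,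
    leadingCoeff_single toLex.injective]
  exact ⟨rfl, rfl⟩

/-- the building block `(∏ᵢ Xᵢ)^(d - |t|) * ∏ₖ P_{k+1}^(t k)` -/
def Qt (n d : ℕ) (t : Fin n →₀ ℕ) : MvPolynomial (Fin n) ℤ :=
  (∏ i : Fin n, MvPolynomial.X i) ^ (d - ∑ k : Fin n, t k) *
    ∏ k : Fin n, PP n ((k : ℕ) + 1) ^ t k

def uDeg (n d : ℕ) (t : Fin n →₀ ℕ) : Fin n →₀ ℕ :=
  (d - ∑ k : Fin n, t k) • vA (∅ : Finset (Fin n ⊕ Fin n)) +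
    ∑ k : Fin n, t k • vA (A0 n ((k : ℕ) + 1))

lemma Qt_spec (t : Fin n →₀ ℕ) :
    AddMonoidAlgebra.Monic toLex (Qt n d t) ∧
      AddMonoidAlgebra.supDegree toLex (Qt n d t) = toLex (uDeg n d t) := by
  obtain ⟨hX1, hX2⟩ := prodX_spec (n := n)
  have hPk : ∀ k : Fin n, AddMonoidAlgebra.Monic toLex (PP n ((k : ℕ) + 1)) ∧
      AddMonoidAlgebra.supDegree toLex (PP n ((k : ℕ) + 1)) = toLex (vA (A0 n ((k : ℕ) + 1))) :=
    fun k => PP_spec (Nat.le_add_left 1 _) k.isLt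
  have hpow : ∀ k : Fin n, AddMonoidAlgebra.Monic toLex (PP n ((k : ℕ) + 1) ^ t k) ∧
      AddMonoidAlgebra.supDegree toLex (PP n ((k : ℕ) + 1) ^ t k)
        = toLex (t k • vA (A0 n ((k : ℕ) + 1))) := by
    intro k
    refine ⟨(hPk k).1.pow toLex_add toLex.injective, ?_⟩
    rw [(hPk k).1.supDegree_pow rfl toLex_add toLex.injective, (hPk k).2]
    rfl
  have hprod := monic_prod Finset.univ (fun k : Fin n => PP n ((k : ℕ) + 1) ^ t k)
    (fun k => t k • vA (A0 n ((k : ℕ) + 1))) (fun k _ => hpow k)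
  have hXpow : AddMonoidAlgebra.Monic toLex
        ((∏ i : Fin n, (MvPolynomial.X i : MvPolynomial (Fin n) ℤ)) ^ (d - ∑ k : Fin n, t k)) ∧
      AddMonoidAlgebra.supDegree toLex
        ((∏ i : Fin n, (MvPolynomial.X i : MvPolynomial (Fin n) ℤ)) ^ (d - ∑ k : Fin n, t k))
        = toLex ((d - ∑ k : Fin n, t k) • vA (∅ : Finset (Fin n ⊕ Fin n))) := by
    refine ⟨hX1.pow toLex_add toLex.injective, ?_⟩
    rw [hX1.supDegree_pow rfl toLex_add toLex.injective, hX2]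
    rfl
  refine ⟨hXpow.1.mul toLex.injective toLex_add hprod.1, ?_⟩
  rw [Qt, hXpow.1.supDegree_mul toLex.injective toLex_add rfl hprod.1, hXpow.2, hprod.2, uDeg]
  rfl

lemma uDeg_apply (t : Fin n →₀ ℕ) (ht : ∑ k : Fin n, t k ≤ d) (i : Fin n) :
    uDeg n d t i = d + Fin.accumulate n n ⇑t i := by
  rw [uDeg, Finsupp.add_apply, Finsupp.smul_apply, Finsupp.finset_sum_apply]
  have h0 : vA (∅ : Finset (Fin n ⊕ Fin n)) i = 1 := by rw [vA_apply]; simp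
  have h1 : ∀ k : Fin n, (t k • vA (A0 n ((k : ℕ) + 1))) i
      = t k + (if (i : ℕ) ≤ (k : ℕ) then t k else 0) := by
    intro k
    rw [Finsupp.smul_apply, vA_A0_apply, smul_eq_mul]
    split_ifs <;> omega
  rw [Finset.sum_congr rfl fun k _ => h1 k, Finset.sum_add_distrib, ← Finset.sum_filter]
  rw [h0, smul_eq_mul, mul_one, Fin.accumulate_apply]
  omega

lemma uDeg_inj {t s : Fin n →₀ ℕ} (ht : ∑ k : Fin n, t k ≤ d) (hs : ∑ k : Fin n, s k ≤ d)
    (h : uDeg n d t = uDeg n d s) : t = s := by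
  have hacc : Fin.accumulate n n ⇑t = Fin.accumulate n n ⇑s := by
    funext i
    have hi := DFunLike.congr_fun h i
    rw [uDeg_apply t ht i, uDeg_apply s hs i] at hi
    omega
  exact DFunLike.ext' (Fin.accumulate_injective le_rfl hacc)

lemma sum_le_totalDegree {p : MvPolynomial (Fin n) ℤ} {t : Fin n →₀ ℕ} (ht : t ∈ p.support) :
    ∑ k : Fin n, t k ≤ p.totalDegree := by
  have h1 := MvPolynomial.le_totalDegree ht
  rwa [Finsupp.sum_fintype _ _ (fun _ => rfl)] at h1

lemma Q_ne_zero {p : MvPolynomial (Fin n) ℤ} (hp : p ≠ 0) :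
    (∑ t ∈ p.support, MvPolynomial.C (MvPolynomial.coeff t p) * Qt n p.totalDegree t) ≠ 0 := by
  set d := p.totalDegree with hd
  have hC : ∀ t ∈ p.support, (MvPolynomial.C (MvPolynomial.coeff t p) : MvPolynomial (Fin n) ℤ) ≠ 0 := by
    intro t ht
    have hc : MvPolynomial.coeff t p ≠ 0 := MvPolynomial.mem_support_iff.1 ht
    simpa using hc
  have hsd : ∀ t ∈ p.support,
      AddMonoidAlgebra.supDegree toLex
        (MvPolynomial.C (MvPolynomial.coeff t p) * Qt n d t) = toLex (uDeg n d t) := by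
    intro t ht
    rw [(Qt_spec t).1.supDegree_mul_of_ne_zero_left toLex.injective toLex_add (hC t ht),
      MvPolynomial.supDegree_toLex_C, (Qt_spec t).2, zero_add]
  apply sum_ne_zero_of_injOn_supDegree (D := toLex) (Finset.nonempty_iff_ne_empty.2 (MvPolynomial.support_eq_empty.not.2 hp))
  · intro t ht
    exact mul_ne_zero (hC t ht) (Qt_spec t).1.ne_zero
  · intro t ht s hs he
    rw [Finset.mem_coe] at ht hs
    dsimp only [Function.comp] at he
    rw [hsd t ht, hsd s hs] at he
    exact uDeg_inj (sum_le_totalDegree ht) (sum_le_totalDegree hs) (toLex.injective he)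

lemma EE_nat (k : ℕ) : EE n n ((k : ℤ) + 1) = (lamSet n n).esymm (k + 1) := by
  have h : ((k : ℤ) + 1) = ((k + 1 : ℕ) : ℤ) := by push_cast; ring
  rw [EE, h, if_neg (not_lt.2 (by positivity)), Int.toNat_natCast]

lemma prodX_eq : (∏ i : Fin n, (MvPolynomial.X i : MvPolynomial (Fin n) ℤ)) =
    MvPolynomial.monomial (vA (∅ : Finset (Fin n ⊕ Fin n))) 1 := by
  have hv : (∑ i : Fin n, Finsupp.single i (1 : ℕ)) = vA (∅ : Finset (Fin n ⊕ Fin n)) := by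
    ext i
    rw [Finsupp.finset_sum_apply, vA_apply]
    simp [Finsupp.single_apply]
  have h1 := prod_single (M := Fin n →₀ ℕ) Finset.univ (fun i : Fin n => Finsupp.single i (1 : ℕ))
  refine (Finset.prod_congr rfl fun i _ => rfl).trans (h1.trans ?_)
  rw [hv]
  rfl

lemma iota_prodX : iota n (∏ i : Fin n, MvPolynomial.X i) = lamAll n := by
  rw [prodX_eq, iota_monomial]
  have h : natX n (vA (∅ : Finset (Fin n ⊕ Fin n))) = onevec n := by
    rw [← exp_eq ∅, Finset.sum_empty, add_zero]
  rw [h, lamAll]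

lemma iota_Q (p : MvPolynomial (Fin n) ℤ) :
    iota n (∑ t ∈ p.support, MvPolynomial.C (MvPolynomial.coeff t p) * Qt n p.totalDegree t) =
      lamAll n ^ p.totalDegree *
        MvPolynomial.aeval (fun i : Fin n => EE n n (((i : ℕ) : ℤ) + 1)) p := by
  set d := p.totalDegree with hd
  conv_rhs => rw [p.as_sum]
  rw [map_sum, map_sum, Finset.mul_sum]
  refine Finset.sum_congr rfl fun t ht => ?_
  have hS : ∑ k : Fin n, t k ≤ d := sum_le_totalDegree ht
  rw [MvPolynomial.aeval_monomial, map_mul, Qt, map_mul, map_pow, iota_prodX, map_prod]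
  simp_rw [map_pow, iota_PP, EE_nat]
  rw [Finsupp.prod_fintype _ _ (fun i => pow_zero _)]
  have hiC : iota n (MvPolynomial.C (MvPolynomial.coeff t p)) =
      algebraMap ℤ (LaurentRing n) (MvPolynomial.coeff t p) := by
    rw [← MvPolynomial.algebraMap_eq, AlgHom.commutes]
  rw [hiC]
  have key : lamAll n ^ d = lamAll n ^ (d - ∑ k : Fin n, t k) * ∏ k : Fin n, lamAll n ^ t k := by
    rw [Finset.prod_pow_eq_pow_sum, ← pow_add, Nat.sub_add_cancel hS]
  rw [key]
  simp_rw [mul_pow]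
  rw [Finset.prod_mul_distrib]
  ring

end EAI
end EAI

theorem E_algebraically_independent (n : ℕ) (hn : 1 ≤ n) :
    Function.Injective
      ⇑(MvPolynomial.aeval (R := ℤ) (fun i : Fin n => EE n n (((i : ℕ) : ℤ) + 1))) := by
  rw [injective_iff_map_eq_zero]
  intro p hp0
  by_contra hp
  apply EAI.Q_ne_zero hp
  have h2 := EAI.iota_Q p
  rw [hp0, mul_zero] at h2
  exact EAI.iota_injective (by rw [h2, map_zero])
end

section
/- For every integer n ≥ 1, the elements F_{1,n},…,F_{n,n} of R_n are algebraically independent over ℤ; that is, the ℤ-algebra homomorphism ℤ[f_1,…,f_n] → R_n sending f_i to F_{i,n} is injective. -/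
open MvPolynomial

namespace FAI
noncomputable section
variable {n : ℕ}

/-- `p` has lex-leading monomial `a` with leading coefficient `1`. -/
def IsMonicAt (p : LaurentRing n) (a : Fin n →₀ ℤ) : Prop :=
  p.coeff a = 1 ∧ ∀ b ∈ p.coeff.support, toLex b ≤ toLex a

lemma IsMonicAt.apply_eq_zero {p : LaurentRing n} {a x : Fin n →₀ ℤ}
    (hp : IsMonicAt p a) (hx : toLex a < toLex x) : p.coeff x = 0 := by
  by_contra h
  exact absurd (hp.2 x (Finsupp.mem_support_iff.mpr h)) (not_le.mpr hx)

lemma IsMonicAt.one : IsMonicAt (1 : LaurentRing n) 0 := by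
  constructor
  · rw [AddMonoidAlgebra.one_def, AddMonoidAlgebra.coeff_single, Finsupp.single_eq_same]
  · intro b hb
    rw [AddMonoidAlgebra.one_def, AddMonoidAlgebra.coeff_single] at hb
    have := Finsupp.support_single_subset hb
    simp only [Finset.mem_singleton] at this
    subst this; exact le_rfl

lemma IsMonicAt.mul {p q : LaurentRing n} {a b : Fin n →₀ ℤ}
    (hp : IsMonicAt p a) (hq : IsMonicAt q b) : IsMonicAt (p * q) (a + b) := by
  classical
  constructor
  · rw [AddMonoidAlgebra.coeff_mul, Finsupp.sum]
    rw [Finset.sum_eq_single_of_mem a (Finsupp.mem_support_iff.mpr (by rw [hp.1]; exact one_ne_zero))]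
    · rw [Finsupp.sum]
      rw [Finset.sum_eq_single_of_mem b
        (Finsupp.mem_support_iff.mpr (by rw [hq.1]; exact one_ne_zero))]
      · rw [if_pos rfl, hp.1, hq.1, one_mul]
      · intro a₂ ha₂ hne
        rw [if_neg (fun h => hne (by exact add_left_cancel h))]
    · intro a₁ ha₁ hne
      rw [Finsupp.sum]
      refine Finset.sum_eq_zero fun a₂ ha₂ => ?_
      rw [if_neg]
      intro h
      have h1 : toLex a₁ < toLex a := lt_of_le_of_ne (hp.2 a₁ ha₁) (by simpa using hne)
      have h2 : toLex a₂ ≤ toLex b := hq.2 a₂ ha₂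
      have : toLex (a₁ + a₂) < toLex (a + b) := by
        rw [toLex_add, toLex_add]
        exact add_lt_add_of_lt_of_le h1 h2
      rw [h] at this
      exact lt_irrefl _ this
  · intro c hc
    have := AddMonoidAlgebra.support_coeff_mul_subset p q hc
    rw [Finset.mem_add] at this
    obtain ⟨x, hx, y, hy, rfl⟩ := this
    rw [toLex_add, toLex_add]
    exact add_le_add (hp.2 x hx) (hq.2 y hy)

lemma IsMonicAt.pow {p : LaurentRing n} {a : Fin n →₀ ℤ} (hp : IsMonicAt p a) :
    ∀ e : ℕ, IsMonicAt (p ^ e) (e • a)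
  | 0 => by rw [pow_zero, zero_smul]; exact IsMonicAt.one
  | e + 1 => by
      rw [pow_succ, succ_nsmul]
      exact (hp.pow e).mul hp

lemma IsMonicAt.prod {ι : Type*} (s : Finset ι) (p : ι → LaurentRing n)
    (d : ι → (Fin n →₀ ℤ)) (h : ∀ i ∈ s, IsMonicAt (p i) (d i)) :
    IsMonicAt (∏ i ∈ s, p i) (∑ i ∈ s, d i) := by
  classical
  induction s using Finset.induction_on with
  | empty => simpa using IsMonicAt.one
  | @insert x s hx ih =>
      rw [Finset.prod_insert hx, Finset.sum_insert hx]
      exact (h x (Finset.mem_insert_self _ _)).mul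
        (ih fun i hi => h i (Finset.mem_insert_of_mem hi))


variable {n : ℕ}

theorem Finsupp.lt_of_forall_lt_of_lt {α N : Type*} [LT α] [LT N] [Zero N]
    (a b : Lex (α →₀ N)) (i : α) :
    (∀ j < i, ofLex a j = ofLex b j) → ofLex a i < ofLex b i → a < b :=
  fun h1 h2 => ⟨i, h1, h2⟩

def uvec (n j : ℕ) : Fin n →₀ ℤ :=
  ∑ i ∈ Finset.univ.filter (fun i : Fin n => (i : ℕ) < j), Finsupp.single i 1

lemma uvec_apply (j : ℕ) (i : Fin n) : uvec n j i = if (i : ℕ) < j then 1 else 0 := by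
  classical
  rw [uvec, Finset.sum_apply']
  simp [Finsupp.single_apply, Finset.sum_ite_eq]

lemma toLex_uvec_lt {a b : ℕ} (hab : a < b) (hbn : b ≤ n) :
    toLex (uvec n a) < toLex (uvec n b) := by
  have han : a < n := lt_of_lt_of_le hab hbn
  refine Finsupp.lt_of_forall_lt_of_lt _ _ ⟨a, han⟩ (fun j hj => ?_) ?_
  · have hj' : (j : ℕ) < a := hj
    simp [uvec_apply, hj', lt_of_lt_of_le hj' (le_of_lt hab)]
  · simp [uvec_apply, hab]

def eps : Fin n × Bool → (Fin n →₀ ℤ) := fun x => Finsupp.single x.1 (if x.2 then 1 else -1)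

def M0 (n : ℕ) : Multiset (Fin n × Bool) :=
  (Finset.univ.val.map (fun i : Fin n => (i, true))) +
    (Finset.univ.val.map (fun i : Fin n => (i, false)))

def sumeps (U : Multiset (Fin n × Bool)) : Fin n →₀ ℤ := (U.map eps).sum

lemma count_M0 (x : Fin n × Bool) : (M0 n).count x = 1 := by
  classical
  rcases x with ⟨i, b⟩
  have h1 : Function.Injective (fun i : Fin n => (i, true)) := fun a b h => by
    simpa using h
  have h2 : Function.Injective (fun i : Fin n => (i, false)) := fun a b h => by
    simpa using h
  have hm1 : (i, false) ∉ Finset.univ.val.map (fun i : Fin n => (i, true)) := by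
    intro h
    obtain ⟨y, -, hy⟩ := Multiset.mem_map.mp h
    exact Bool.noConfusion (congrArg Prod.snd hy)
  have hm2 : (i, true) ∉ Finset.univ.val.map (fun i : Fin n => (i, false)) := by
    intro h
    obtain ⟨y, -, hy⟩ := Multiset.mem_map.mp h
    exact Bool.noConfusion (congrArg Prod.snd hy)
  cases b
  · rw [M0, Multiset.count_add]
    rw [Multiset.count_eq_zero_of_notMem hm1]
    rw [Multiset.count_map_eq_count' _ _ h2]
    rw [Multiset.count_eq_one_of_mem Finset.univ.nodup (Finset.mem_univ i)]
  · rw [M0, Multiset.count_add]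
    rw [Multiset.count_map_eq_count' _ _ h1]
    rw [Multiset.count_eq_zero_of_notMem hm2]
    rw [Multiset.count_eq_one_of_mem Finset.univ.nodup (Finset.mem_univ i)]

lemma M0_nodup : (M0 n).Nodup := by
  rw [Multiset.nodup_iff_count_le_one]
  intro x; rw [count_M0]

lemma sumeps_apply (U : Multiset (Fin n × Bool)) (i : Fin n) :
    sumeps U i = (U.count (i, true) : ℤ) - (U.count (i, false) : ℤ) := by
  classical
  induction U using Multiset.induction_on with
  | empty => simp [sumeps]
  | cons x U ih =>
      rcases x with ⟨a, b⟩
      rw [sumeps, Multiset.map_cons, Multiset.sum_cons, Finsupp.add_apply]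
      rw [sumeps] at ih
      rw [ih, Multiset.count_cons, Multiset.count_cons, eps]
      by_cases h : a = i
      · subst h
        cases b <;> simp [Finsupp.single_apply] <;> push_cast <;> ring
      · have h1 : ¬ ((i, true) = (a, b)) := by simp [(Ne.symm h : i ≠ a)]
        have h2 : ¬ ((i, false) = (a, b)) := by simp [(Ne.symm h : i ≠ a)]
        simp [Finsupp.single_apply, h, h1, h2]

lemma card_eq_sum_counts (U : Multiset (Fin n × Bool)) :
    Multiset.card U = ∑ x ∈ (Finset.univ : Finset (Fin n × Bool)), U.count x := by
  classical
  have h := Finset.sum_subset (Finset.subset_univ U.toFinset)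
      (f := fun x => U.count x) ?_
  · rw [Multiset.toFinset_sum_count_eq] at h
    exact h.trans (Finset.sum_congr rfl (fun x _ => rfl))
  · intro x _ hx
    rw [Multiset.count_eq_zero]
    exact fun hmem => hx (Multiset.mem_toFinset.mpr hmem)

def Uj (n j : ℕ) : Multiset (Fin n × Bool) :=
  (Finset.univ.filter (fun i : Fin n => (i : ℕ) < j)).val.map (fun i => (i, true))

lemma filtcard {j : ℕ} (hj : j ≤ n) :
    (Finset.univ.filter (fun i : Fin n => (i : ℕ) < j)).card = j := by
  have : Finset.univ.filter (fun i : Fin n => (i : ℕ) < j) =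
      Finset.univ.map (Fin.castLEEmb hj) := by
    ext x
    constructor
    · intro hx
      rw [Finset.mem_filter] at hx
      exact Finset.mem_map.mpr ⟨⟨x, hx.2⟩, Finset.mem_univ _, by ext; simp [Fin.castLEEmb]⟩
    · intro hx
      obtain ⟨y, -, rfl⟩ := Finset.mem_map.mp hx
      exact Finset.mem_filter.mpr ⟨Finset.mem_univ _, by simpa using y.isLt⟩
  rw [this, Finset.card_map, Finset.card_univ, Fintype.card_fin]

lemma count_Uj (j : ℕ) (x : Fin n × Bool) :
    (Uj n j).count x = if (x.1 : ℕ) < j ∧ x.2 = true then 1 else 0 := by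
  classical
  rcases x with ⟨i, b⟩
  have h1 : Function.Injective (fun i : Fin n => (i, true)) := fun a b h => by simpa using h
  cases b
  · rw [Uj, Multiset.count_eq_zero_of_notMem (by simp [Multiset.mem_map])]
    simp
  · rw [Uj, Multiset.count_map_eq_count' _ _ h1]
    by_cases h : (i : ℕ) < j
    · rw [Multiset.count_eq_one_of_mem (Finset.nodup _) (by simp [h])]
      simp [h]
    · rw [Multiset.count_eq_zero_of_notMem (by simp [h])]
      simp [h]

lemma Uj_le (j : ℕ) : Uj n j ≤ M0 n := by
  rw [Multiset.le_iff_count]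
  intro x
  rw [count_Uj, count_M0]
  split_ifs <;> omega

lemma card_Uj {j : ℕ} (hj : j ≤ n) : Multiset.card (Uj n j) = j := by
  rw [Uj, Multiset.card_map, ← Finset.card_def, filtcard hj]

lemma sumeps_Uj (j : ℕ) : sumeps (Uj n j) = uvec n j := by
  classical
  ext i
  rw [sumeps_apply, count_Uj, count_Uj, uvec_apply]
  split_ifs <;> simp_all


lemma count_le_one {U : Multiset (Fin n × Bool)} (hU : U ≤ M0 n) (x : Fin n × Bool) :
    U.count x ≤ 1 := by
  have h := Multiset.le_iff_count.mp hU x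
  rwa [count_M0] at h

lemma sum_counts {j : ℕ} {U : Multiset (Fin n × Bool)} (hU : U ≤ M0 n)
    (hcard : Multiset.card U = j) :
    ∑ i : Fin n, (U.count (i, true) + U.count (i, false)) = j := by
  have h := card_eq_sum_counts (n := n) U
  rw [hcard, Fintype.sum_prod_type] at h
  rw [h]
  exact Finset.sum_congr rfl fun i _ => (Fintype.sum_bool (fun b => Multiset.count (i, b) U)).symm

lemma key1 {j : ℕ} {U : Multiset (Fin n × Bool)} (hjn : j ≤ n) (hU : U ≤ M0 n)
    (hcard : Multiset.card U = j) (hs : sumeps U = uvec n j) : U = Uj n j := by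
  classical
  have hb : ∀ x, U.count x ≤ 1 := count_le_one hU
  have hv : ∀ i : Fin n, (U.count (i, true) : ℤ) - U.count (i, false)
      = if (i : ℕ) < j then 1 else 0 := by
    intro i; rw [← sumeps_apply, hs, uvec_apply]
  have hlt : ∀ i : Fin n, (i : ℕ) < j → U.count (i, true) = 1 ∧ U.count (i, false) = 0 := by
    intro i hi
    have h1 := hv i; rw [if_pos hi] at h1
    have h2 := hb (i, true); have h3 := hb (i, false)
    omega
  have hsum := sum_counts hU hcard
  have hfsum : ∑ i ∈ Finset.univ.filter (fun i : Fin n => (i : ℕ) < j),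
      (U.count (i, true) + U.count (i, false)) = j := by
    have : ∀ i ∈ Finset.univ.filter (fun i : Fin n => (i : ℕ) < j),
        U.count (i, true) + U.count (i, false) = 1 := by
      intro i hi
      have := hlt i (Finset.mem_filter.mp hi).2
      omega
    rw [Finset.sum_congr rfl this, Finset.sum_const, smul_eq_mul, mul_one, filtcard hjn]
  have hrest : ∀ i : Fin n, ¬ (i : ℕ) < j →
      U.count (i, true) = 0 ∧ U.count (i, false) = 0 := by
    intro i hi
    have hsplit := Finset.sum_filter_add_sum_filter_not Finset.univ
      (fun i : Fin n => (i : ℕ) < j) (fun i => U.count (i, true) + U.count (i, false))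
    rw [hfsum, hsum] at hsplit
    have hz : ∑ i ∈ Finset.univ.filter (fun i : Fin n => ¬ (i : ℕ) < j),
        (U.count (i, true) + U.count (i, false)) = 0 := by omega
    have := Finset.sum_eq_zero_iff.mp hz i (by simp; omega)
    omega
  rw [Multiset.ext]
  rintro ⟨i, b⟩
  rw [count_Uj]
  cases b
  · simp only [Bool.false_eq_true, and_false, if_false]
    by_cases hi : (i : ℕ) < j
    · exact (hlt i hi).2
    · exact (hrest i hi).2
  · by_cases hi : (i : ℕ) < j
    · rw [if_pos ⟨hi, rfl⟩]; exact (hlt i hi).1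
    · rw [if_neg (fun h => hi h.1)]; exact (hrest i hi).1

lemma key2 {j : ℕ} {U : Multiset (Fin n × Bool)} (hjn : j ≤ n) (hU : U ≤ M0 n)
    (hcard : Multiset.card U = j) (hs : sumeps U ≠ uvec n j) :
    toLex (sumeps U) < toLex (uvec n j) := by
  classical
  have hb : ∀ x, U.count x ≤ 1 := count_le_one hU
  set v := sumeps U with hv
  have hex : (Finset.univ.filter (fun i : Fin n => v i ≠ uvec n j i)).Nonempty := by
    by_contra h
    rw [Finset.not_nonempty_iff_eq_empty, Finset.filter_eq_empty_iff] at h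
    exact hs (Finsupp.ext fun i => by_contra fun hne => (h (Finset.mem_univ i)) hne)
  set i0 := Finset.min' _ hex with hi0
  have hi0mem := Finset.min'_mem _ hex
  have hi0ne : v i0 ≠ uvec n j i0 := (Finset.mem_filter.mp hi0mem).2
  have hbelow : ∀ i : Fin n, i < i0 → v i = uvec n j i := by
    intro i hi
    by_contra hne
    exact absurd (Finset.min'_le _ i (Finset.mem_filter.mpr ⟨Finset.mem_univ _, hne⟩))
      (not_le.mpr hi)
  refine Finsupp.lt_of_forall_lt_of_lt _ _ i0 (fun i hi => hbelow i hi) ?_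
  show v i0 < uvec n j i0
  have hvi0 : v i0 = (U.count (i0, true) : ℤ) - U.count (i0, false) := sumeps_apply U i0
  by_cases hij : (i0 : ℕ) < j
  · rw [uvec_apply, if_pos hij] at hi0ne ⊢
    have h1 := hb (i0, true); have h2 := hb (i0, false)
    omega
  · rw [uvec_apply, if_neg hij] at hi0ne ⊢
    by_contra hge
    push_neg at hge
    have hct : U.count (i0, true) = 1 := by
      have h1 := hb (i0, true); have h2 := hb (i0, false)
      omega
    set s' : Finset (Fin n) := insert i0 (Finset.univ.filter (fun i : Fin n => (i : ℕ) < j))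
      with hs'
    have hcard' : s'.card = j + 1 := by
      rw [hs', Finset.card_insert_of_notMem (by simp [hij]), filtcard hjn]
    have hone : ∀ i ∈ s', 1 ≤ U.count (i, true) := by
      intro i hi
      rcases Finset.mem_insert.mp hi with rfl | hi'
      · omega
      · have hij' : (i : ℕ) < j := (Finset.mem_filter.mp hi').2
        have hvi : v i = 1 := by
          rw [hbelow i (by rw [Fin.lt_def]; omega), uvec_apply, if_pos hij']
        have h1 := sumeps_apply U i
        have h2 := hb (i, false)
        rw [← hv] at h1
        omega
    have hle : ∑ i ∈ s', U.count (i, true) ≤ j := by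
      calc ∑ i ∈ s', U.count (i, true)
          ≤ ∑ i ∈ s', (U.count (i, true) + U.count (i, false)) :=
            Finset.sum_le_sum (fun i _ => Nat.le_add_right _ _)
        _ ≤ ∑ i : Fin n, (U.count (i, true) + U.count (i, false)) :=
            Finset.sum_le_sum_of_subset (Finset.subset_univ _)
        _ = j := sum_counts hU hcard
    have hge' : j + 1 ≤ ∑ i ∈ s', U.count (i, true) := by
      calc j + 1 = s'.card := hcard'.symm
        _ = ∑ _i ∈ s', 1 := Finset.card_eq_sum_ones s'
        _ ≤ ∑ i ∈ s', U.count (i, true) := Finset.sum_le_sum hone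
    omega


lemma lamSet_eq : lamSet n n = (M0 n).map (fun x => AddMonoidAlgebra.single (eps x) (1:ℤ)) := by
  rw [lamSet, M0, Multiset.map_add, Multiset.map_map, Multiset.map_map]
  have hfilter : Finset.univ.filter (fun i : Fin n => (i : ℕ) < n) = Finset.univ :=
    Finset.filter_true_of_mem (fun i _ => i.isLt)
  rw [hfilter]
  congr 1
  all_goals exact Multiset.map_congr rfl (fun i _ => by simp [lam, lamInv, eps])

lemma prod_map_single (U : Multiset (Fin n × Bool)) :
    (U.map (fun x => AddMonoidAlgebra.single (eps x) (1:ℤ))).prod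
      = AddMonoidAlgebra.single (sumeps U) 1 := by
  induction U using Multiset.induction_on with
  | empty => simp [sumeps, AddMonoidAlgebra.one_def]
  | cons x U ih =>
      rw [Multiset.map_cons, Multiset.prod_cons, ih, AddMonoidAlgebra.single_mul_single, one_mul]
      congr 1
      rw [sumeps, sumeps, Multiset.map_cons, Multiset.sum_cons]

lemma multiset_sum_apply (m : Multiset (LaurentRing n)) (x : Fin n →₀ ℤ) :
    m.sum.coeff x = (m.map (fun f : LaurentRing n => f.coeff x)).sum := by
  induction m using Multiset.induction_on with
  | empty => simp
  | cons a m ih =>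
      rw [Multiset.sum_cons, Multiset.map_cons, Multiset.sum_cons, ← ih]
      rw [AddMonoidAlgebra.coeff_add]
      exact Finsupp.add_apply _ _ _

lemma esymm_apply (j : ℕ) (x : Fin n →₀ ℤ) :
    ((lamSet n n).esymm j).coeff x
      = (((M0 n).powersetCard j).map (fun U => if sumeps U = x then (1:ℤ) else 0)).sum := by
  classical
  rw [lamSet_eq, Multiset.esymm, Multiset.powersetCard_map, Multiset.map_map]
  have h1 : ((M0 n).powersetCard j).map
        (Multiset.prod ∘ Multiset.map (fun x => AddMonoidAlgebra.single (eps x) (1:ℤ)))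
      = ((M0 n).powersetCard j).map (fun U => AddMonoidAlgebra.single (sumeps U) (1:ℤ)) :=
    Multiset.map_congr rfl (fun U _ => prod_map_single U)
  rw [h1, multiset_sum_apply, Multiset.map_map]
  exact congrArg Multiset.sum (Multiset.map_congr rfl (fun U _ => by
    simp [AddMonoidAlgebra.coeff_single, Finsupp.single_apply]))

lemma esymm_monic {j : ℕ} (hjn : j ≤ n) : IsMonicAt ((lamSet n n).esymm j) (uvec n j) := by
  classical
  have hpcnodup : ((M0 n).powersetCard j).Nodup := M0_nodup.powersetCard
  have hUjmem : Uj n j ∈ (M0 n).powersetCard j :=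
    Multiset.mem_powersetCard.mpr ⟨Uj_le j, card_Uj hjn⟩
  constructor
  · rw [esymm_apply]
    rw [← Multiset.cons_erase hUjmem, Multiset.map_cons, Multiset.sum_cons, if_pos (sumeps_Uj j)]
    have hrest : ((((M0 n).powersetCard j).erase (Uj n j)).map
        (fun U => if sumeps U = uvec n j then (1:ℤ) else 0)).sum = 0 := by
      apply Multiset.sum_eq_zero
      intro y hy
      obtain ⟨U, hU, rfl⟩ := Multiset.mem_map.mp hy
      have hUne : U ≠ Uj n j := ((Multiset.Nodup.mem_erase_iff hpcnodup).mp hU).1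
      have hUM := Multiset.mem_powersetCard.mp (Multiset.mem_of_mem_erase hU)
      rw [if_neg]
      intro hsx
      exact hUne (key1 hjn hUM.1 hUM.2 hsx)
    rw [hrest, add_zero]
  · intro b hb
    by_contra hnb
    rw [not_le] at hnb
    have hz : ((lamSet n n).esymm j).coeff b = 0 := by
      rw [esymm_apply]
      apply Multiset.sum_eq_zero
      intro y hy
      obtain ⟨U, hU, rfl⟩ := Multiset.mem_map.mp hy
      have hUM := Multiset.mem_powersetCard.mp hU
      rw [if_neg]
      intro hsx
      by_cases he : sumeps U = uvec n j
      · rw [he] at hsx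
        rw [← hsx] at hnb
        exact lt_irrefl _ hnb
      · have hlt := key2 hjn hUM.1 hUM.2 he
        rw [hsx] at hlt
        exact absurd (hlt.trans hnb) (lt_irrefl _)
    exact (Finsupp.mem_support_iff.mp hb) hz

lemma EE_nonneg (j : ℕ) : EE n n (j : ℤ) = (lamSet n n).esymm j := by
  rw [EE, if_neg (by omega), Int.toNat_natCast]

lemma FF_monic (k : Fin n) :
    IsMonicAt (FF n n (((k : ℕ) : ℤ) + 1)) (uvec n ((k : ℕ) + 1)) := by
  classical
  have hkn : (k : ℕ) + 1 ≤ n := k.isLt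
  have hE1 : EE n n (((k : ℕ) : ℤ) + 1) = (lamSet n n).esymm ((k : ℕ) + 1) := by
    have : ((k : ℕ) : ℤ) + 1 = (((k : ℕ) + 1 : ℕ) : ℤ) := by push_cast; ring
    rw [this, EE_nonneg]
  have hmonic1 := esymm_monic (n := n) (j := (k : ℕ) + 1) hkn
  have harg : ((k : ℕ) : ℤ) + 1 - 2 = ((k : ℕ) : ℤ) - 1 := by ring
  rw [FF, harg, hE1]
  by_cases hk0 : (k : ℕ) = 0
  · have : EE n n (((k : ℕ) : ℤ) - 1) = 0 := by
      rw [EE, if_pos (by omega)]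
    rw [this, sub_zero]
    exact hmonic1
  · have harg2 : ((k : ℕ) : ℤ) - 1 = (((k : ℕ) - 1 : ℕ) : ℤ) := by omega
    rw [harg2, EE_nonneg]
    have hmonic2 := esymm_monic (n := n) (j := (k : ℕ) - 1) (by omega)
    have hlt : toLex (uvec n ((k : ℕ) - 1)) < toLex (uvec n ((k : ℕ) + 1)) :=
      toLex_uvec_lt (by omega) hkn
    constructor
    · rw [AddMonoidAlgebra.coeff_sub, Finsupp.sub_apply, hmonic1.1, hmonic2.apply_eq_zero hlt, sub_zero]
    · intro b hb
      rw [AddMonoidAlgebra.coeff_sub] at hb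
      rcases Finset.mem_union.mp (Finsupp.support_sub hb) with h | h
      · exact hmonic1.2 b h
      · exact (hmonic2.2 b h).trans hlt.le

def mdeg (α : Fin n →₀ ℕ) : Fin n →₀ ℤ := ∑ k ∈ Finset.univ, (α k) • uvec n ((k : ℕ) + 1)

lemma mdeg_apply (α : Fin n →₀ ℕ) (i : Fin n) :
    mdeg α i = ∑ k ∈ Finset.univ.filter (fun k : Fin n => (i : ℕ) ≤ (k : ℕ)), (α k : ℤ) := by
  classical
  rw [mdeg, Finsupp.finset_sum_apply, Finset.sum_filter]
  refine Finset.sum_congr rfl fun k _ => ?_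
  rw [Finsupp.smul_apply, uvec_apply]
  by_cases h : (i : ℕ) ≤ (k : ℕ)
  · rw [if_pos (by omega), if_pos h]
    simp
  · rw [if_neg (by omega), if_neg h]
    simp

lemma mdeg_injective : Function.Injective (mdeg (n := n)) := by
  classical
  intro α β h
  have hS : ∀ t : ℕ,
      (∑ k ∈ Finset.univ.filter (fun k : Fin n => t ≤ (k : ℕ)), (α k : ℤ))
        = ∑ k ∈ Finset.univ.filter (fun k : Fin n => t ≤ (k : ℕ)), (β k : ℤ) := by
    intro t
    by_cases ht : t < n
    · have := DFunLike.congr_fun h (⟨t, ht⟩ : Fin n)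
      rwa [mdeg_apply, mdeg_apply] at this
    · have he : Finset.univ.filter (fun k : Fin n => t ≤ (k : ℕ)) = ∅ := by
        apply Finset.filter_eq_empty_iff.mpr
        intro k _
        have := k.isLt
        omega
      rw [he, Finset.sum_empty, Finset.sum_empty]
  have hstep : ∀ γ : Fin n →₀ ℕ, ∀ k : Fin n, (γ k : ℤ)
      = (∑ j ∈ Finset.univ.filter (fun j : Fin n => (k : ℕ) ≤ (j : ℕ)), (γ j : ℤ))
        - ∑ j ∈ Finset.univ.filter (fun j : Fin n => (k : ℕ) + 1 ≤ (j : ℕ)), (γ j : ℤ) := by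
    intro γ k
    have hsplit : Finset.univ.filter (fun j : Fin n => (k : ℕ) ≤ (j : ℕ))
        = insert k (Finset.univ.filter (fun j : Fin n => (k : ℕ) + 1 ≤ (j : ℕ))) := by
      ext x
      simp only [Finset.mem_filter, Finset.mem_univ, true_and, Finset.mem_insert]
      constructor
      · intro hx
        rcases Nat.eq_or_lt_of_le hx with he | hlt
        · left; exact Fin.ext (by omega)
        · right; omega
      · rintro (rfl | hx) <;> omega
    rw [hsplit, Finset.sum_insert (by simp)]
    ring
  ext k
  have h1 := hstep α k
  have h2 := hstep β k
  rw [hS k, hS ((k : ℕ) + 1)] at h1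
  have : (α k : ℤ) = (β k : ℤ) := by rw [h1, ← h2]
  exact_mod_cast this

lemma prod_FF_monic (α : Fin n →₀ ℕ) :
    IsMonicAt (∏ k : Fin n, FF n n ((Fin.val k : ℤ) + 1) ^ α k) (mdeg α) :=
  IsMonicAt.prod _ _ _ (fun k _ => (FF_monic k).pow (α k))

end
end FAI

theorem F_algebraically_independent (n : ℕ) (hn : 1 ≤ n) :
    Function.Injective
      ⇑(MvPolynomial.aeval (R := ℤ) (fun i : Fin n => FF n n (((i : ℕ) : ℤ) + 1))) := by
  classical
  rw [injective_iff_map_eq_zero]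
  intro p hp
  by_contra hpne
  obtain ⟨A, hAmem, hAmax⟩ := Finset.exists_max_image p.support
    (fun α => toLex (FAI.mdeg (n := n) α)) (MvPolynomial.support_nonempty.mpr hpne)
  set Φ := (MvPolynomial.aeval (R := ℤ) (fun i : Fin n => FF n n (((i : ℕ) : ℤ) + 1))) with hΦ
  have hterm : ∀ α : Fin n →₀ ℕ, Φ (monomial α (coeff α p))
      = (coeff α p) • ∏ k : Fin n, FF n n ((Fin.val k : ℤ) + 1) ^ α k := by
    intro α
    rw [hΦ, aeval_monomial, ← Algebra.smul_def]
    congr 1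
    rw [Finsupp.prod_fintype]
    intro i; exact pow_zero _
  have hc : (Φ p).coeff (FAI.mdeg A) = coeff A p := by
    conv_lhs => rw [← MvPolynomial.support_sum_monomial_coeff p]
    rw [map_sum, AddMonoidAlgebra.coeff_sum, Finsupp.finset_sum_apply]
    rw [Finset.sum_eq_single_of_mem A hAmem]
    · rw [hterm, AddMonoidAlgebra.coeff_smul, Finsupp.smul_apply, (FAI.prod_FF_monic A).1, smul_eq_mul, mul_one]
    · intro α hα hne
      rw [hterm, AddMonoidAlgebra.coeff_smul, Finsupp.smul_apply,
        (FAI.prod_FF_monic α).apply_eq_zero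
          (lt_of_le_of_ne (hAmax α hα)
            (fun he => hne (FAI.mdeg_injective (toLex.injective he)))),
        smul_zero]
  have h0 : Φ p = 0 := hp
  rw [h0] at hc
  exact (MvPolynomial.mem_support_iff.mp hAmem) hc.symm
end
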